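/- Let A be an n × n real matrix partitioned into an N × N block matrix with square diagonal blocks A_{ii} of size b_i × b_i, and let t = (t_1; …; t_N) be a vector of size n partitioned conformally. Suppose blocks C̄_{ij} (for 1 ≤ i, j ≤ N) are given satisfying: C̄_{ij} = A_{ij} whenever i = 1 or j = 1, and otherwise C̄_{ij} = A_{ij} − Σ_{k=1}^{min(i,j)−1} L̄_{ik} (2 F̄_{kj} − F̄_{kj} D̄_{kk} F̄_{kj}) Ū_{kj}, where L̄_{ik} = C̄_{ik} for i > k, Ū_{kj} = C̄_{kj} for k < j, the diagonal blocks D̄_{kk} = C̄_{kk} are invertible, and each F̄_{kj} is a b_k × b_k matrix satisfying the filtering condition F̄_{kj} (Ū_{kj} t_j) = D̄_{kk}^{-1} (Ū_{kj} t_j). Let M = (L̄ + D̄) D̄^{-1} (Ū + D̄), where L̄ is the strictly block lower triangular part, Ū the strictly block upper triangular part, and D̄ the block diagonal part formed by the C̄_{ij}. Then M satisfies the right filtering property M t = A t. -/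

import Mathlib

open Matrix

/-!
Since `D̄⁻¹` inverts `D̄`, `M = (L̄ + D̄ + Ū) + L̄ D̄⁻¹ Ū`, so the `(i,j)` block of `M` is
`C̄ᵢⱼ + Σ_{k < min(i,j)} C̄ᵢₖ D̄ₖₖ⁻¹ C̄ₖⱼ`, while the recursion for `C̄` says that the `(i,j)` block of
`A` is `C̄ᵢⱼ + Σ_{k < min(i,j)} C̄ᵢₖ (2F̄ₖⱼ - F̄ₖⱼ D̄ₖₖ F̄ₖⱼ) C̄ₖⱼ`. On the vector `C̄ₖⱼ tⱼ` the
filter `F̄ₖⱼ` acts as `D̄ₖₖ⁻¹`, hence so does its second-order correction `2F̄ₖⱼ - F̄ₖⱼ D̄ₖₖ F̄ₖⱼ`,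
and the two blocks agree already on `tⱼ`.
-/

/-- The `(i,j)` block of a matrix partitioned into an `N × N` block structure with
diagonal blocks of sizes `b 0, …, b (N-1)`. -/
def blk {N : ℕ} {b : Fin N → ℕ}
    (A : Matrix ((k : Fin N) × Fin (b k)) ((k : Fin N) × Fin (b k)) ℝ)
    (i j : Fin N) : Matrix (Fin (b i)) (Fin (b j)) ℝ :=
  Matrix.of fun x y => A ⟨i, x⟩ ⟨j, y⟩

theorem add_mul_mul_add_eq_of_mul_eq_one {R : Type*} [Ring R] {L U D D' : R}
    (h₁ : D * D' = 1) (h₂ : D' * D = 1) :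
    (L + D) * D' * (U + D) = L + D + U + L * D' * U := by
  simp only [add_mul, mul_add, mul_assoc, h₂, mul_one]
  rw [← mul_assoc D D', h₁, one_mul]
  abel

theorem Matrix.two_mul_sub_mul_mul_mulVec_of_mulVec_eq_inv_mulVec {n : Type*} [Fintype n]
    [DecidableEq n] {R : Type*} [CommRing R] {F D : Matrix n n R} {w : n → R}
    (hD : IsUnit D) (hF : F *ᵥ w = D⁻¹ *ᵥ w) :
    (2 * F - F * D * F) *ᵥ w = D⁻¹ *ᵥ w := by
  have hFDF : (F * D * F) *ᵥ w = D⁻¹ *ᵥ w := by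
    rw [← mulVec_mulVec, hF, mulVec_mulVec,
      mul_nonsing_inv_cancel_right _ _ ((isUnit_iff_isUnit_det D).mp hD), hF]
  rw [sub_mulVec, hFDF, two_mul, add_mulVec, hF, add_sub_cancel_right]

theorem Matrix.blockDiagonal'_mul_blockDiagonal'_inv {o : Type*} [Fintype o] [DecidableEq o]
    {m : o → Type*} [∀ k, Fintype (m k)] [∀ k, DecidableEq (m k)] {R : Type*} [CommRing R]
    {d : ∀ k, Matrix (m k) (m k) R} (hd : ∀ k, IsUnit (d k)) :
    blockDiagonal' d * blockDiagonal' (fun k => (d k)⁻¹) = 1 := by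
  rw [← blockDiagonal'_mul, ← blockDiagonal'_one]
  congr with k : 1
  exact mul_nonsing_inv _ ((isUnit_iff_isUnit_det _).mp (hd k))

theorem Matrix.blockDiagonal'_inv_mul_blockDiagonal' {o : Type*} [Fintype o] [DecidableEq o]
    {m : o → Type*} [∀ k, Fintype (m k)] [∀ k, DecidableEq (m k)] {R : Type*} [CommRing R]
    {d : ∀ k, Matrix (m k) (m k) R} (hd : ∀ k, IsUnit (d k)) :
    blockDiagonal' (fun k => (d k)⁻¹) * blockDiagonal' d = 1 := by
  rw [← blockDiagonal'_mul, ← blockDiagonal'_one]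
  congr with k : 1
  exact nonsing_inv_mul _ ((isUnit_iff_isUnit_det _).mp (hd k))

section Blocks

variable {N : ℕ} {b : Fin N → ℕ}

theorem blk_add (P Q : Matrix ((k : Fin N) × Fin (b k)) ((k : Fin N) × Fin (b k)) ℝ)
    (i j : Fin N) : blk (P + Q) i j = blk P i j + blk Q i j :=
  rfl

theorem blk_mul (P Q : Matrix ((k : Fin N) × Fin (b k)) ((k : Fin N) × Fin (b k)) ℝ)
    (i j : Fin N) : blk (P * Q) i j = ∑ k, blk P i k * blk Q k j := by
  ext x y
  simp only [blk, mul_apply, of_apply, Matrix.sum_apply, ← Finset.univ_sigma_univ,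
    Finset.sum_sigma]

theorem blk_blockDiagonal'_self (d : ∀ k, Matrix (Fin (b k)) (Fin (b k)) ℝ) (i : Fin N) :
    blk (blockDiagonal' d) i i = d i := by
  ext x y
  simp [blk]

theorem blk_blockDiagonal'_of_ne (d : ∀ k, Matrix (Fin (b k)) (Fin (b k)) ℝ) {i j : Fin N}
    (h : i ≠ j) : blk (blockDiagonal' d) i j = 0 := by
  ext x y
  simp [blk, blockDiagonal'_apply_ne d x y h]

theorem blk_blockDiagonal'_mul (d : ∀ k, Matrix (Fin (b k)) (Fin (b k)) ℝ)
    (P : Matrix ((k : Fin N) × Fin (b k)) ((k : Fin N) × Fin (b k)) ℝ) (i j : Fin N) :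
    blk (blockDiagonal' d * P) i j = d i * blk P i j := by
  rw [blk_mul, Finset.sum_eq_single i (fun k _ hk => by
    rw [blk_blockDiagonal'_of_ne d hk.symm, Matrix.zero_mul]) (by simp),
    blk_blockDiagonal'_self]

theorem mulVec_apply_eq_sum_blk_mulVec
    (P : Matrix ((k : Fin N) × Fin (b k)) ((k : Fin N) × Fin (b k)) ℝ)
    (v : ((k : Fin N) × Fin (b k)) → ℝ) (i : Fin N) (x : Fin (b i)) :
    (P *ᵥ v) ⟨i, x⟩ = ∑ j, (blk P i j *ᵥ fun y => v ⟨j, y⟩) x := by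
  simp only [mulVec, dotProduct, blk, of_apply, ← Finset.univ_sigma_univ,
    Finset.sum_sigma]

theorem mulVec_eq_of_blk_mulVec_eq
    {P Q : Matrix ((k : Fin N) × Fin (b k)) ((k : Fin N) × Fin (b k)) ℝ}
    {v : ((k : Fin N) × Fin (b k)) → ℝ}
    (h : ∀ i j, (blk P i j *ᵥ fun y => v ⟨j, y⟩) = blk Q i j *ᵥ fun y => v ⟨j, y⟩) :
    P *ᵥ v = Q *ᵥ v := by
  ext ⟨i, x⟩
  simp only [mulVec_apply_eq_sum_blk_mulVec, h]

section Triangular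

variable (C : ∀ i j : Fin N, Matrix (Fin (b i)) (Fin (b j)) ℝ)
  {L U : Matrix ((k : Fin N) × Fin (b k)) ((k : Fin N) × Fin (b k)) ℝ}

theorem blk_lower_add_blockDiagonal'_add_upper (hL : ∀ i j : Fin N, j < i → blk L i j = C i j)
    (hL0 : ∀ i j : Fin N, ¬ j < i → blk L i j = 0)
    (hU : ∀ i j : Fin N, i < j → blk U i j = C i j)
    (hU0 : ∀ i j : Fin N, ¬ i < j → blk U i j = 0) (i j : Fin N) :
    blk (L + blockDiagonal' (fun k => C k k) + U) i j = C i j := by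
  rw [blk_add, blk_add]
  rcases lt_trichotomy i j with h | rfl | h
  · rw [hL0 i j h.not_gt, blk_blockDiagonal'_of_ne _ h.ne, hU i j h, zero_add, zero_add]
  · rw [hL0 i i (lt_irrefl i), blk_blockDiagonal'_self, hU0 i i (lt_irrefl i), zero_add, add_zero]
  · rw [hL i j h, blk_blockDiagonal'_of_ne _ h.ne', hU0 i j h.not_gt, add_zero, add_zero]

theorem blk_lower_mul_blockDiagonal'_mul_upper (hL : ∀ i j : Fin N, j < i → blk L i j = C i j)
    (hL0 : ∀ i j : Fin N, ¬ j < i → blk L i j = 0)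
    (hU : ∀ i j : Fin N, i < j → blk U i j = C i j)
    (hU0 : ∀ i j : Fin N, ¬ i < j → blk U i j = 0)
    (G : ∀ k, Matrix (Fin (b k)) (Fin (b k)) ℝ) (i j : Fin N) :
    blk (L * blockDiagonal' G * U) i j =
      ∑ k ∈ Finset.univ.filter (fun k : Fin N => k < i ∧ k < j), C i k * G k * C k j := by
  rw [mul_assoc, blk_mul]
  simp only [blk_blockDiagonal'_mul, Finset.sum_filter]
  refine Finset.sum_congr rfl fun k _ => ?_
  split_ifs with h
  · rw [hL i k h.1, hU k j h.2, Matrix.mul_assoc]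
  · rcases not_and_or.mp h with h | h
    · rw [hL0 i k h, Matrix.zero_mul]
    · rw [hU0 k j h, Matrix.mul_zero, Matrix.mul_zero]

end Triangular

end Blocks

theorem blk_eq_add_sum_of_eq_sub_sum {N : ℕ} {b : Fin N → ℕ}
    {A : Matrix ((k : Fin N) × Fin (b k)) ((k : Fin N) × Fin (b k)) ℝ}
    {C : ∀ i j : Fin N, Matrix (Fin (b i)) (Fin (b j)) ℝ}
    (T : ∀ i : Fin N, Fin N → ∀ j : Fin N, Matrix (Fin (b i)) (Fin (b j)) ℝ)
    (hC1 : ∀ i j : Fin N, i.1 = 0 ∨ j.1 = 0 → C i j = blk A i j)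
    (hC2 : ∀ i j : Fin N, i.1 ≠ 0 → j.1 ≠ 0 →
      C i j = blk A i j - ∑ k ∈ Finset.univ.filter (fun k : Fin N => k < i ∧ k < j), T i k j)
    (i j : Fin N) :
    blk A i j = C i j + ∑ k ∈ Finset.univ.filter (fun k : Fin N => k < i ∧ k < j), T i k j := by
  by_cases h : i.1 = 0 ∨ j.1 = 0
  · rw [hC1 i j h, Finset.sum_eq_zero fun k hk => ?_, add_zero]
    obtain ⟨hki, hkj⟩ := (Finset.mem_filter.mp hk).2
    rw [Fin.lt_def] at hki hkj
    omega
  · obtain ⟨hi, hj⟩ := not_or.mp h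
    rw [hC2 i j hi hj, sub_add_cancel]

/-- The block filtering preconditioner `M = (L̄ + D̄) D̄⁻¹ (Ū + D̄)` built from blocks
`C̄ᵢⱼ = Aᵢⱼ` if `i` or `j` is the first index and
`C̄ᵢⱼ = Aᵢⱼ - Σ_{k < min(i,j)} L̄ᵢₖ (2F̄ₖⱼ - F̄ₖⱼ D̄ₖₖ F̄ₖⱼ) Ūₖⱼ` otherwise, where each
`F̄ₖⱼ` satisfies the filtering condition `F̄ₖⱼ (Ūₖⱼ tⱼ) = D̄ₖₖ⁻¹ (Ūₖⱼ tⱼ)`,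
satisfies `M t = A t`. -/
theorem block_filtering_decomposition_second_order {N : ℕ} {b : Fin N → ℕ}
    (A : Matrix ((k : Fin N) × Fin (b k)) ((k : Fin N) × Fin (b k)) ℝ)
    (t : ((k : Fin N) × Fin (b k)) → ℝ)
    (C : ∀ i j : Fin N, Matrix (Fin (b i)) (Fin (b j)) ℝ)
    (F : ∀ k j : Fin N, Matrix (Fin (b k)) (Fin (b k)) ℝ)
    (hD : ∀ k : Fin N, IsUnit (C k k))
    (hC1 : ∀ i j : Fin N, i.1 = 0 ∨ j.1 = 0 → C i j = blk A i j)
    (hC2 : ∀ i j : Fin N, i.1 ≠ 0 → j.1 ≠ 0 →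
      C i j = blk A i j -
        ∑ k ∈ Finset.univ.filter (fun k : Fin N => k < i ∧ k < j),
          C i k * (2 * F k j - F k j * C k k * F k j) * C k j)
    (hF : ∀ k j : Fin N, k < j →
      (F k j) *ᵥ ((C k j) *ᵥ fun y => t ⟨j, y⟩) =
        (C k k)⁻¹ *ᵥ ((C k j) *ᵥ fun y => t ⟨j, y⟩))
    (L U M : Matrix ((k : Fin N) × Fin (b k)) ((k : Fin N) × Fin (b k)) ℝ)
    (hL : ∀ i j : Fin N, j < i → blk L i j = C i j)
    (hL0 : ∀ i j : Fin N, ¬ j < i → blk L i j = 0)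
    (hU : ∀ i j : Fin N, i < j → blk U i j = C i j)
    (hU0 : ∀ i j : Fin N, ¬ i < j → blk U i j = 0)
    (hM : M = (L + blockDiagonal' (fun k => C k k)) *
        blockDiagonal' (fun k => (C k k)⁻¹) *
        (U + blockDiagonal' (fun k => C k k))) :
    M *ᵥ t = A *ᵥ t := by
  rw [hM, add_mul_mul_add_eq_of_mul_eq_one (blockDiagonal'_mul_blockDiagonal'_inv hD)
    (blockDiagonal'_inv_mul_blockDiagonal' hD)]
  refine mulVec_eq_of_blk_mulVec_eq fun i j => ?_
  rw [blk_add, blk_lower_add_blockDiagonal'_add_upper C hL hL0 hU hU0,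
    blk_lower_mul_blockDiagonal'_mul_upper C hL hL0 hU hU0, blk_eq_add_sum_of_eq_sub_sum _ hC1 hC2]
  simp only [add_mulVec, sum_mulVec]
  refine congrArg _ (Finset.sum_congr rfl fun k hk => ?_)
  simp only [← mulVec_mulVec]
  rw [two_mul_sub_mul_mul_mulVec_of_mulVec_eq_inv_mulVec (hD k)
    (hF k j (Finset.mem_filter.mp hk).2.2)]
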